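/- Fix κ_y, κ_z > 0 and unit vectors μ_y, μ_z ∈ ℝ^p. For α ∈ (0,1)∪(1,∞) with κ_α = ‖ακ_y μ_y + (1−α)κ_z μ_z‖₂ > 0, let R(α) = (ν/(α−1))·ln(κ_y^α κ_z^{1−α}/κ_α) + (α/(α−1))·ln(I_ν(κ_α)/I_ν(κ_y)) − ln(I_ν(κ_α)/I_ν(κ_z)) be the analytical expression of the Rényi divergence of order α between the two von Mises–Fisher distributions. Then lim_{α→1} R(α) = ν·ln(κ_y/κ_z) − ln(I_ν(κ_y)/I_ν(κ_z)) + r_ν(κ_y)·⟨κ_y μ_y − κ_z μ_z, μ_y⟩, the analytical expression of the Kullback–Leibler divergence, where r_ν(κ) = I_{ν+1}(κ)/I_ν(κ). -/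

import Mathlib

/-!
Write `κ(α)` for the norm `‖ακ_y μ_y + (1 − α)κ_z μ_z‖`. Multiplying the first two terms of the
Rényi expression by `α − 1` gives a function `G` with `G(1) = 0` (because `κ(1) = κ_y`), so these
terms are the difference quotient of `G` at `1` and tend to `G'(1)`; the last term converges by
continuity. `G'(1)` only involves `κ'(1) = ⟪κ_y μ_y − κ_z μ_z, μ_y⟫` and the logarithmic
derivative `I_ν'/I_ν = ν/z + r_ν`, which comes from differentiating the series of `I_ν` termwise.
-/

open Real Filter
open scoped RealInnerProductSpace

/-- `ν = p/2 − 1`. -/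
noncomputable def nuOf (p : ℕ) : ℝ := (p : ℝ) / 2 - 1

/-- The modified Bessel function of the first kind,
`I_ν(z) = (z/2)^ν ∑_{k=0}^∞ (z/2)^{2k}/(k!·Γ(ν+k+1))`. -/
noncomputable def besselI (ν z : ℝ) : ℝ :=
  (z / 2) ^ ν * ∑' k : ℕ, (z / 2) ^ (2 * k) / (Nat.factorial k * Real.Gamma (ν + k + 1))

/-- The ratio of modified Bessel functions `r_ν(κ) = I_{ν+1}(κ)/I_ν(κ)`. -/
noncomputable def besselRatio (ν κ : ℝ) : ℝ := besselI (ν + 1) κ / besselI ν κ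

open Nat Topology

theorem Real.Gamma_le_Gamma_add_nat {s : ℝ} (hs : 1 ≤ s) (k : ℕ) : Gamma s ≤ Gamma (s + k) := by
  induction k with
  | zero => simp
  | succ k ih =>
    rw [cast_add_one, ← add_assoc, Gamma_add_one (by positivity)]
    exact ih.trans (le_mul_of_one_le_left (Gamma_pos_of_pos (by positivity)).le (by linarith))

noncomputable def besselCoeff (ν : ℝ) (k : ℕ) : ℝ := (k ! * Gamma (ν + k + 1))⁻¹

noncomputable def besselSeries (ν t : ℝ) : ℝ := ∑' k, besselCoeff ν k * t ^ k

theorem besselI_eq_rpow_mul_besselSeries (ν z : ℝ) :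
    besselI ν z = (z / 2) ^ ν * besselSeries ν ((z / 2) ^ 2) := by
  simp only [besselI, besselSeries, besselCoeff, ← pow_mul, div_eq_mul_inv _ ((_ : ℝ) * _),
    mul_comm]

section

variable {ν z : ℝ}

theorem besselCoeff_pos (hν : 0 ≤ ν) (k : ℕ) : 0 < besselCoeff ν k := by
  have := Gamma_pos_of_pos (show 0 < ν + k + 1 by positivity)
  unfold besselCoeff; positivity

theorem succ_mul_besselCoeff_succ (k : ℕ) :
    (k + 1) * besselCoeff ν (k + 1) = besselCoeff (ν + 1) k := by
  have hΓ : Gamma (ν + ↑(k + 1) + 1) = Gamma (ν + 1 + k + 1) := by push_cast; ring_nf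
  rw [besselCoeff, besselCoeff, hΓ, factorial_succ, cast_mul, mul_assoc, mul_inv, cast_add_one,
    ← mul_assoc, mul_inv_cancel₀ (by positivity), one_mul]

theorem besselCoeff_le (hν : 0 ≤ ν) (k : ℕ) :
    besselCoeff ν k ≤ (Gamma (ν + 1))⁻¹ * (k ! : ℝ)⁻¹ := by
  have hΓ := Gamma_le_Gamma_add_nat (show 1 ≤ ν + 1 by linarith) k
  rw [besselCoeff, mul_inv, mul_comm, add_right_comm]
  gcongr

theorem summable_besselCoeff_mul_pow (hν : 0 ≤ ν) (t : ℝ) :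
    Summable fun k => besselCoeff ν k * t ^ k := by
  refine .of_norm_bounded ((summable_pow_div_factorial |t|).mul_left (Gamma (ν + 1))⁻¹) fun k => ?_
  rw [norm_mul, norm_pow, Real.norm_of_nonneg (besselCoeff_pos hν k).le, Real.norm_eq_abs,
    div_eq_mul_inv, mul_comm (|t| ^ k), ← mul_assoc]
  exact mul_le_mul_of_nonneg_right (besselCoeff_le hν k) (by positivity)

theorem hasDerivAt_besselSeries (hν : 0 ≤ ν) (t : ℝ) :
    HasDerivAt (besselSeries ν) (besselSeries (ν + 1) t) t := by
  set R := |t| + 1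
  have ht : t ∈ Set.Ioo (-R) R := abs_lt.mp (lt_add_one _)
  have hbound : ∀ k, ∀ y ∈ Set.Ioo (-R) R,
      ‖besselCoeff ν k * (k * y ^ (k - 1))‖ ≤ besselCoeff ν k * (k * R ^ (k - 1)) := by
    intro k y hy
    rw [norm_mul, norm_mul, norm_pow, Real.norm_of_nonneg (besselCoeff_pos hν k).le,
      RCLike.norm_natCast]
    gcongr
    · exact (besselCoeff_pos hν k).le
    · exact (abs_lt.mpr hy).le
  have hsum : Summable fun k => besselCoeff ν k * (k * R ^ (k - 1)) := by
    rw [← summable_nat_add_iff 1]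
    refine (summable_besselCoeff_mul_pow (ν := ν + 1) (by linarith) R).congr fun k => ?_
    rw [← succ_mul_besselCoeff_succ, Nat.add_sub_cancel]; push_cast; ring
  have hderiv := hasDerivAt_tsum_of_isPreconnected hsum isOpen_Ioo isPreconnected_Ioo
    (fun k y _ => (hasDerivAt_pow k y).const_mul (besselCoeff ν k)) hbound ht
    (summable_besselCoeff_mul_pow hν t) ht
  refine hderiv.congr_deriv ?_
  rw [(hsum.of_norm_bounded fun k => hbound k t ht).tsum_eq_zero_add, besselSeries]
  simp only [CharP.cast_eq_zero, zero_mul, mul_zero, zero_add]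
  congr 1 with k
  rw [← succ_mul_besselCoeff_succ, Nat.add_sub_cancel]; push_cast; ring

theorem besselSeries_pos (hν : 0 ≤ ν) {t : ℝ} (ht : 0 ≤ t) : 0 < besselSeries ν t :=
  (summable_besselCoeff_mul_pow hν t).tsum_pos
    (fun k => mul_nonneg (besselCoeff_pos hν k).le (by positivity)) 0
    (by simpa using besselCoeff_pos hν 0)

theorem besselI_pos (hν : 0 ≤ ν) (hz : 0 < z) : 0 < besselI ν z := by
  rw [besselI_eq_rpow_mul_besselSeries]
  exact mul_pos (by positivity) (besselSeries_pos hν (by positivity))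

theorem hasDerivAt_besselI (hν : 0 ≤ ν) (hz : 0 < z) :
    HasDerivAt (besselI ν) ((ν / z + besselRatio ν z) * besselI ν z) z := by
  have hhalf : HasDerivAt (fun y : ℝ => y / 2) (1 / 2) z := (hasDerivAt_id z).div_const 2
  have h := (hhalf.rpow_const (p := ν) (Or.inl (by positivity))).mul
    ((hasDerivAt_besselSeries hν _).comp z (hhalf.pow 2))
  rw [funext (besselI_eq_rpow_mul_besselSeries ν)]
  refine h.congr_deriv ?_
  have hz2 : 0 < z / 2 := by positivity
  simp only [besselRatio, besselI_eq_rpow_mul_besselSeries, Function.comp_apply, Pi.pow_apply,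
    Real.rpow_sub_one hz2.ne', Real.rpow_add_one hz2.ne']
  have := (besselSeries_pos hν (sq_nonneg (z / 2))).ne'
  generalize besselSeries ν ((z / 2) ^ 2) = S at *
  field_simp
  ring

theorem continuousAt_besselI (hν : 0 ≤ ν) (hz : 0 < z) : ContinuousAt (besselI ν) z :=
  (hasDerivAt_besselI hν hz).continuousAt

end

theorem HasDerivAt.norm {F : Type*} [NormedAddCommGroup F] [InnerProductSpace ℝ F]
    {f : ℝ → F} {f' : F} {x : ℝ} (hf : HasDerivAt f f' x) (h0 : f x ≠ 0) :
    HasDerivAt (‖f ·‖) (⟪f x, f'⟫ / ‖f x‖) x := by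
  have h := hf.norm_sq.sqrt (by positivity)
  simp only [Real.sqrt_sq (norm_nonneg _)] at h
  convert h using 1
  ring

theorem hasDerivAt_norm_mul_smul_add_mul_smul {F : Type*} [NormedAddCommGroup F]
    [InnerProductSpace ℝ F] {u v : F} {s t : ℝ} (hs : 0 < s) (hu : ‖u‖ = 1) :
    HasDerivAt (fun α : ℝ => ‖(α * s) • u + ((1 - α) * t) • v‖) ⟪s • u - t • v, u⟫ 1 := by
  have hf : HasDerivAt (fun α : ℝ => (α * s) • u + ((1 - α) * t) • v) (s • u - t • v) 1 := by
    refine ((((hasDerivAt_id 1).mul_const s).smul_const u).add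
      ((((hasDerivAt_id 1).const_sub 1).mul_const t).smul_const v)).congr_deriv ?_
    simp [sub_eq_add_neg]
  convert hf.norm (by simp [hs.ne', ← norm_ne_zero_iff, hu]) using 1
  simp [norm_smul, hu, abs_of_pos hs, real_inner_smul_left, real_inner_comm, hs.ne']

section

variable {ν a b K' : ℝ} {K : ℝ → ℝ}

theorem hasDerivAt_log_rpow_mul_rpow_div (ha : 0 < a) (hb : 0 < b) (hK : HasDerivAt K K' 1)
    (hK1 : K 1 = a) :
    HasDerivAt (fun α => log (a ^ α * b ^ (1 - α) / K α)) (log a - log b - K' / a) 1 := by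
  have h := ((((hasDerivAt_id 1).const_rpow ha).mul
    (((hasDerivAt_id 1).const_sub 1).const_rpow hb)).div hK (by rw [hK1]; exact ha.ne')).log
    (by simp [hK1, ha.ne'])
  refine h.congr_deriv ?_
  simp only [id, Pi.mul_apply, Pi.div_apply, hK1, rpow_one, sub_self, rpow_zero]
  field_simp
  ring

theorem hasDerivAt_mul_log_besselI_div (hν : 0 ≤ ν) (ha : 0 < a) (hK : HasDerivAt K K' 1)
    (hK1 : K 1 = a) :
    HasDerivAt (fun α => α * log (besselI ν (K α) / besselI ν a))
      ((ν / a + besselRatio ν a) * K') 1 := by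
  have hIa := (besselI_pos hν ha).ne'
  have hI := hasDerivAt_besselI hν ha
  rw [← hK1] at hI
  have h := (hasDerivAt_id 1).mul (((hI.comp 1 hK).div_const (besselI ν a)).log
    (by simp [hK1, hIa]))
  refine h.congr_deriv ?_
  simp only [id, Function.comp_apply, hK1, div_self hIa, log_one]
  field_simp
  ring

theorem tendsto_renyi_of_hasDerivAt (hν : 0 ≤ ν) (ha : 0 < a) (hb : 0 < b)
    (hK : HasDerivAt K K' 1) (hK1 : K 1 = a) :
    Tendsto (fun α : ℝ =>
        ν / (α - 1) * log (a ^ α * b ^ (1 - α) / K α)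
          + α / (α - 1) * log (besselI ν (K α) / besselI ν a)
          - log (besselI ν (K α) / besselI ν b))
      (𝓝[≠] 1)
      (𝓝 (ν * log (a / b) - log (besselI ν a / besselI ν b) + besselRatio ν a * K')) := by
  set G := fun α => ν * log (a ^ α * b ^ (1 - α) / K α)
    + α * log (besselI ν (K α) / besselI ν a)
  have hG1 : G 1 = 0 := by simp [G, hK1, ha.ne', (besselI_pos hν ha).ne']
  have hG : HasDerivAt G (ν * log (a / b) + besselRatio ν a * K') 1 := by
    refine (((hasDerivAt_log_rpow_mul_rpow_div ha hb hK hK1).const_mul ν).add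
      (hasDerivAt_mul_log_besselI_div hν ha hK hK1)).congr_deriv ?_
    rw [log_div ha.ne' hb.ne']
    field_simp
    ring
  have hlast : Tendsto (fun α => log (besselI ν (K α) / besselI ν b)) (𝓝[≠] 1)
      (𝓝 (log (besselI ν a / besselI ν b))) := by
    have hc := (((continuousAt_besselI hν ha).comp_of_eq hK.continuousAt hK1).div_const
      (besselI ν b)).log (by simp [hK1, (besselI_pos hν ha).ne', (besselI_pos hν hb).ne'])
    simpa [hK1] using hc.tendsto.mono_left nhdsWithin_le_nhds
  convert (hasDerivAt_iff_tendsto_slope.mp hG).sub hlast using 2 with α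
  · rw [slope_def_field, hG1]
    ring
  · ring

end

theorem renyi_tendsto_kl_general (p : ℕ) (hp : 2 ≤ p)
    (κy κz : ℝ) (hκy : 0 < κy) (hκz : 0 < κz)
    (μy μz : EuclideanSpace ℝ (Fin p)) (hμy : ‖μy‖ = 1) :
    Tendsto (fun α : ℝ =>
        nuOf p / (α - 1)
            * Real.log (κy ^ α * κz ^ (1 - α) / ‖(α * κy) • μy + ((1 - α) * κz) • μz‖)
          + α / (α - 1)
            * Real.log (besselI (nuOf p) ‖(α * κy) • μy + ((1 - α) * κz) • μz‖
                / besselI (nuOf p) κy)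
          - Real.log (besselI (nuOf p) ‖(α * κy) • μy + ((1 - α) * κz) • μz‖
                / besselI (nuOf p) κz))
      (nhdsWithin 1 {(1 : ℝ)}ᶜ)
      (nhds (nuOf p * Real.log (κy / κz)
        - Real.log (besselI (nuOf p) κy / besselI (nuOf p) κz)
        + besselRatio (nuOf p) κy * ⟪κy • μy - κz • μz, μy⟫)) := by
  have hν : 0 ≤ nuOf p := by
    have : (2 : ℝ) ≤ p := by exact_mod_cast hp
    rw [nuOf]
    linarith
  exact tendsto_renyi_of_hasDerivAt hν hκy hκz (hasDerivAt_norm_mul_smul_add_mul_smul hκy hμy)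
    (by simp [norm_smul, hμy, hκy.le])

/-- The analytical expression of the Rényi divergence of order `α` tends, as
`α → 1`, to the analytical expression of the Kullback–Leibler divergence. -/
theorem renyi_tendsto_kl (p : ℕ) (hp : 2 ≤ p)
    (κy κz : ℝ) (hκy : 0 < κy) (hκz : 0 < κz)
    (μy μz : EuclideanSpace ℝ (Fin p)) (hμy : ‖μy‖ = 1) (hμz : ‖μz‖ = 1) :
    Tendsto (fun α : ℝ =>
        nuOf p / (α - 1)
            * Real.log (κy ^ α * κz ^ (1 - α) / ‖(α * κy) • μy + ((1 - α) * κz) • μz‖)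
          + α / (α - 1)
            * Real.log (besselI (nuOf p) ‖(α * κy) • μy + ((1 - α) * κz) • μz‖
                / besselI (nuOf p) κy)
          - Real.log (besselI (nuOf p) ‖(α * κy) • μy + ((1 - α) * κz) • μz‖
                / besselI (nuOf p) κz))
      (nhdsWithin 1 {(1 : ℝ)}ᶜ)
      (nhds (nuOf p * Real.log (κy / κz)
        - Real.log (besselI (nuOf p) κy / besselI (nuOf p) κz)
        + besselRatio (nuOf p) κy * ⟪κy • μy - κz • μz, μy⟫)) :=
  renyi_tendsto_kl_general p hp κy κz hκy hκz μy μz hμy
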